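/- Let n ≥ 3 and let T ⊆ {1,…,n} contain exactly one of the two elements n−1 and n. Then the geometric realization of the induced subcomplex K'_{χ',T} is homotopy equivalent to the sphere S^{|T|−1}. -/

import Mathlib

/-- The `(i,j)` entry of the characteristic matrix `χ'` of the small cover over
`P₅ × I^{n−2}` (rows `1,…,n`, columns `1,…,2n+1`): row `i` has `1`'s exactly at positions
`i`, `n+i` and `2n+1`. -/
def chi'Entry (n i j : ℕ) : ZMod 2 :=
  if j = i ∨ j = n + i ∨ j = 2 * n + 1 then 1 else 0

/-- The support of `χ'_T = ∑_{i∈T} (row i of χ')`, as a subset of `{1,…,2n+1}`. -/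
def chi'Supp (n : ℕ) (T : Finset ℕ) : Finset ℕ :=
  (Finset.Icc 1 (2 * n + 1)).filter (fun j => (∑ i ∈ T, chi'Entry n i j) ≠ 0)

/-- The vertex set of the 5-cycle `C₅`, in cyclic order `n−1, n, 2n−1, 2n, 2n+1`. -/
def pentCyc (n : ℕ) : Finset ℕ := {n - 1, n, 2 * n - 1, 2 * n, 2 * n + 1}

/-- The edges of the 5-cycle `C₅` with vertices `n−1, n, 2n−1, 2n, 2n+1` in cyclic order. -/
def pentEdges (n : ℕ) : Finset (Finset ℕ) :=
  {{n - 1, n}, {n, 2 * n - 1}, {2 * n - 1, 2 * n}, {2 * n, 2 * n + 1}, {2 * n + 1, n - 1}}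

/-- Faces of `K'`, the simplicial join of the 5-cycle `C₅` (on vertices
`n−1, n, 2n−1, 2n, 2n+1`) with the boundary complex of the `(n−2)`-dimensional cross
polytope on `{1,…,n−2} ∪ {n+1,…,2n−2}` with antipodal pairs `{i, n+i}` (`1 ≤ i ≤ n−2`):
`t` is a face iff its intersection with the cycle is a face of the cycle (empty, a vertex,
or an edge) and it contains no antipodal pair. -/
def pentFace (n : ℕ) (t : Finset ℕ) : Prop :=
  t ⊆ Finset.Icc 1 (2 * n + 1) ∧
  (∀ i ∈ Finset.Icc 1 (n - 2), ¬(i ∈ t ∧ n + i ∈ t)) ∧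
  (t ∩ pentCyc n = ∅ ∨ (∃ a ∈ pentCyc n, t ∩ pentCyc n = {a}) ∨ t ∩ pentCyc n ∈ pentEdges n)

/-- The geometric realization of an abstract simplicial complex with vertices among
`{0,…,m−1}`, whose faces are given by the predicate `K`: the space of convex weight
functions whose support is a face of `K`. -/
abbrev GeomReal (m : ℕ) (K : Finset ℕ → Prop) : Type :=
  {f : Fin m → ℝ // (∀ v, 0 ≤ f v) ∧ (∑ v, f v = 1) ∧
    K ((Finset.univ.filter (fun v => f v ≠ 0)).image Fin.val)}

/-!
Since `T` contains exactly one `i₀ ∈ {n-1, n}`, the vertices of `K'_{χ',T}` are the `i` and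
`n+i` with `i ∈ T`, possibly together with `2n+1`; of the pentagon only `i₀`, `n+i₀` and `2n+1`
survive, and `2n+1` is adjacent only to the one of `i₀`, `n+i₀` that is its neighbour `v₀` on
`C₅`. So `2n+1` is dominated by `v₀` (adding `v₀` to a face through `2n+1` gives a face), and
sliding the weight of `2n+1` onto `v₀` deformation retracts the realization onto the subcomplex
avoiding `2n+1`. That subcomplex is the boundary of the cross
polytope with antipodal pairs `{i, n+i}`, `i ∈ T`, whose realization is mapped homeomorphically
onto the `ℓ¹` unit sphere of `ℝ^T` by `f ↦ (f i - f (n+i))ᵢ`; radial projection then identifies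
the `ℓ¹` and Euclidean unit spheres.
-/

open Finset

section GeomReal

variable {m : ℕ}

noncomputable def weightSupport (f : Fin m → ℝ) : Finset ℕ :=
  (univ.filter fun v => f v ≠ 0).image Fin.val

lemma mem_weightSupport {f : Fin m → ℝ} {j : ℕ} :
    j ∈ weightSupport f ↔ ∃ v : Fin m, f v ≠ 0 ∧ (v : ℕ) = j := by
  simp [weightSupport]

lemma val_mem_weightSupport {f : Fin m → ℝ} {v : Fin m} :
    (v : ℕ) ∈ weightSupport f ↔ f v ≠ 0 := by
  simp [mem_weightSupport, Fin.val_inj]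

def GeomReal.homeomorphOfIff {K K' : Finset ℕ → Prop} (h : ∀ t, K t ↔ K' t) :
    GeomReal m K ≃ₜ GeomReal m K' :=
  Homeomorph.subtype (Homeomorph.refl _) fun _ => and_congr_right' (and_congr_right' (h _))

def pushWeight (c v : Fin m) (s : ℝ) (f : Fin m → ℝ) : Fin m → ℝ :=
  f + Pi.single v (s * f c) - Pi.single c (s * f c)

variable {c v : Fin m} {s : ℝ} {f : Fin m → ℝ}

@[simp] lemma pushWeight_zero : pushWeight c v 0 f = f := by
  simp [pushWeight]

lemma pushWeight_of_eq_zero (hf : f c = 0) : pushWeight c v s f = f := by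
  simp [pushWeight, hf]

lemma pushWeight_one_apply_self (hcv : c ≠ v) : pushWeight c v 1 f c = 0 := by
  simp [pushWeight, hcv]

lemma sum_pushWeight : ∑ w, pushWeight c v s f w = ∑ w, f w := by
  simp [pushWeight, Finset.sum_add_distrib, Finset.sum_sub_distrib]

lemma pushWeight_nonneg (hcv : c ≠ v) (hf : ∀ w, 0 ≤ f w) (hs₀ : 0 ≤ s) (hs₁ : s ≤ 1)
    (w : Fin m) : 0 ≤ pushWeight c v s f w := by
  have hfc := hf c
  rcases eq_or_ne w c with rfl | hwc
  · simp only [pushWeight, Pi.sub_apply, Pi.add_apply, Pi.single_eq_same,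
      Pi.single_eq_of_ne hcv]
    nlinarith
  · rcases eq_or_ne w v with rfl | hwv
    · simp only [pushWeight, Pi.sub_apply, Pi.add_apply, Pi.single_eq_same,
        Pi.single_eq_of_ne hwc, sub_zero]
      exact add_nonneg (hf w) (mul_nonneg hs₀ hfc)
    · simpa [pushWeight, hwc, hwv] using hf w

lemma weightSupport_pushWeight_subset :
    weightSupport (pushWeight c v s f) ⊆ insert (v : ℕ) (weightSupport f) := by
  intro j hj
  obtain ⟨w, hw, rfl⟩ := mem_weightSupport.1 hj
  rw [mem_insert, val_mem_weightSupport, Fin.val_inj]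
  by_contra! h
  obtain ⟨hwv, hfw⟩ := h
  apply hw
  rcases eq_or_ne w c with rfl | hwc
  · simp [pushWeight, hfw]
  · simp [pushWeight, hwv, hwc, hfw]

lemma continuous_pushWeight :
    Continuous fun p : ℝ × (Fin m → ℝ) => pushWeight c v p.1 p.2 := by
  have hc : Continuous fun p : ℝ × (Fin m → ℝ) => p.1 * p.2 c := by fun_prop
  exact (continuous_snd.add ((continuous_single v).comp hc)).sub ((continuous_single c).comp hc)

variable {K : Finset ℕ → Prop} (hcv : c ≠ v) (hK : ∀ s t, s ⊆ t → K t → K s)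
  (hdom : ∀ t, K t → (c : ℕ) ∈ t → K (insert (v : ℕ) t))
include hcv hK hdom

lemma pushWeight_mem (x : GeomReal m K) (hs₀ : 0 ≤ s) (hs₁ : s ≤ 1) :
    (∀ w, 0 ≤ pushWeight c v s x.1 w) ∧ ∑ w, pushWeight c v s x.1 w = 1 ∧
      K (weightSupport (pushWeight c v s x.1)) := by
  obtain ⟨f, hf₀, hf₁, hfK⟩ := x
  refine ⟨pushWeight_nonneg hcv hf₀ hs₀ hs₁, sum_pushWeight.trans hf₁, ?_⟩
  by_cases hfc : f c = 0
  · rwa [pushWeight_of_eq_zero hfc]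
  · exact hK _ _ weightSupport_pushWeight_subset (hdom _ hfK (val_mem_weightSupport.2 hfc))

lemma pushWeight_one_mem (x : GeomReal m K) :
    (∀ w, 0 ≤ pushWeight c v 1 x.1 w) ∧ ∑ w, pushWeight c v 1 x.1 w = 1 ∧
      K (weightSupport (pushWeight c v 1 x.1)) ∧
        (c : ℕ) ∉ weightSupport (pushWeight c v 1 x.1) :=
  let ⟨h₀, h₁, hK'⟩ := pushWeight_mem hcv hK hdom x zero_le_one le_rfl
  ⟨h₀, h₁, hK', fun h => val_mem_weightSupport.1 h (pushWeight_one_apply_self hcv)⟩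

open ContinuousMap in
noncomputable def GeomReal.homotopyEquivDeleteDominated :
    GeomReal m K ≃ₕ GeomReal m (fun t => K t ∧ (c : ℕ) ∉ t) where
  toFun := ⟨fun x => ⟨pushWeight c v 1 x.1, pushWeight_one_mem hcv hK hdom x⟩,
    (continuous_pushWeight.comp (continuous_const.prodMk continuous_subtype_val)).subtype_mk
      fun x => pushWeight_one_mem hcv hK hdom x⟩
  invFun := ⟨fun x => ⟨x.1, x.2.1, x.2.2.1, x.2.2.2.1⟩,
    continuous_subtype_val.subtype_mk fun x => ⟨x.2.1, x.2.2.1, x.2.2.2.1⟩⟩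
  left_inv := by
    refine .symm ⟨⟨⟨fun p => ⟨pushWeight c v p.1 p.2.1,
      pushWeight_mem hcv hK hdom p.2 p.1.2.1 p.1.2.2⟩, ?_⟩,
      fun x => Subtype.ext pushWeight_zero, fun x => rfl⟩⟩
    exact (continuous_pushWeight.comp ((continuous_subtype_val.comp continuous_fst).prodMk
      (continuous_subtype_val.comp continuous_snd))).subtype_mk _
  right_inv := by
    convert Homotopic.refl (ContinuousMap.id (GeomReal m fun t => K t ∧ (c : ℕ) ∉ t)) using 1
    ext x : 2
    exact pushWeight_of_eq_zero (not_not.1 fun h => x.2.2.2.2 (val_mem_weightSupport.2 h))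

end GeomReal

lemma posPart_sub_of_eq_zero_or {α : Type*} [AddCommGroup α] [LinearOrder α]
    [IsOrderedAddMonoid α] {a b : α} (ha : 0 ≤ a) (hb : 0 ≤ b) (hab : a = 0 ∨ b = 0) :
    (a - b)⁺ = a := by
  rcases hab with rfl | rfl
  · simpa using hb
  · simpa using ha

lemma negPart_sub_of_eq_zero_or {α : Type*} [AddCommGroup α] [LinearOrder α]
    [IsOrderedAddMonoid α] {a b : α} (ha : 0 ≤ a) (hb : 0 ≤ b) (hab : a = 0 ∨ b = 0) :
    (a - b)⁻ = b := by
  rcases hab with rfl | rfl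
  · simpa using hb
  · simpa using ha

section CrossPolytope

variable {m : ℕ} {ι : Type*} [Fintype ι] (p q : ι → Fin m)

def IsCrossFace (t : Finset ℕ) : Prop :=
  (∀ j ∈ t, ∃ i, (p i : ℕ) = j ∨ (q i : ℕ) = j) ∧ ∀ i, ¬((p i : ℕ) ∈ t ∧ (q i : ℕ) ∈ t)

noncomputable def crossWeight (z : ι → ℝ) : Fin m → ℝ :=
  ∑ i, ((z i)⁺ • Pi.single (p i) 1 + (z i)⁻ • Pi.single (q i) 1)

variable {p q}

lemma sum_crossWeight (z : ι → ℝ) : ∑ v, crossWeight p q z v = ∑ i, |z i| := by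
  unfold crossWeight
  simp only [Finset.sum_apply]
  rw [Finset.sum_comm]
  refine Finset.sum_congr rfl fun i _ => ?_
  simp [Finset.sum_add_distrib, ← Finset.mul_sum, posPart_add_negPart]

lemma crossWeight_nonneg (z : ι → ℝ) : 0 ≤ crossWeight p q z :=
  Finset.sum_nonneg fun _ _ =>
    add_nonneg (smul_nonneg (posPart_nonneg _) (Pi.single_nonneg.2 zero_le_one))
      (smul_nonneg (negPart_nonneg _) (Pi.single_nonneg.2 zero_le_one))

lemma crossWeight_apply_of_forall_ne (z : ι → ℝ) {v : Fin m}
    (hv : ∀ i, v ≠ p i ∧ v ≠ q i) : crossWeight p q z v = 0 := by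
  unfold crossWeight
  rw [Finset.sum_apply]
  simp [hv]

lemma continuous_crossWeight : Continuous (crossWeight p q) := by
  unfold crossWeight
  simp only [posPart_def, negPart_def]
  fun_prop

variable (he : Function.Injective (Sum.elim p q))
include he

lemma crossWeight_apply_left (z : ι → ℝ) (i : ι) : crossWeight p q z (p i) = (z i)⁺ := by
  have hp : Function.Injective p := he.comp Sum.inl_injective
  have hpq : ∀ j, p i ≠ q j := fun j h => Sum.inl_ne_inr (he h)
  classical
  unfold crossWeight
  rw [Finset.sum_apply]
  simp [Pi.single_apply, hp.eq_iff, hpq]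

lemma crossWeight_apply_right (z : ι → ℝ) (i : ι) : crossWeight p q z (q i) = (z i)⁻ := by
  have hq : Function.Injective q := he.comp Sum.inr_injective
  have hqp : ∀ j, q i ≠ p j := fun j h => Sum.inr_ne_inl (he h)
  classical
  unfold crossWeight
  rw [Finset.sum_apply]
  simp [Pi.single_apply, hq.eq_iff, hqp]

lemma isCrossFace_weightSupport_crossWeight (z : ι → ℝ) :
    IsCrossFace p q (weightSupport (crossWeight p q z)) := by
  refine ⟨fun j hj => ?_, fun i ⟨hpi, hqi⟩ => ?_⟩
  · obtain ⟨v, hv, rfl⟩ := mem_weightSupport.1 hj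
    by_contra! h
    exact hv (crossWeight_apply_of_forall_ne z fun i =>
      ⟨fun e => (h i).1 (by rw [e]), fun e => (h i).2 (by rw [e])⟩)
  · rw [val_mem_weightSupport, crossWeight_apply_left he] at hpi
    rw [val_mem_weightSupport, crossWeight_apply_right he] at hqi
    rcases le_total (z i) 0 with h | h
    exacts [hpi (posPart_eq_zero.2 h), hqi (negPart_eq_zero.2 h)]

lemma crossWeight_sub {f : Fin m → ℝ} (hf₀ : ∀ v, 0 ≤ f v)
    (hf : IsCrossFace p q (weightSupport f)) :
    crossWeight p q (fun i => f (p i) - f (q i)) = f := by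
  funext v
  by_cases hv : ∃ i, v = p i ∨ v = q i
  · obtain ⟨i, hi⟩ := hv
    have hpq : f (p i) = 0 ∨ f (q i) = 0 := by
      by_contra! h
      exact hf.2 i ⟨val_mem_weightSupport.2 h.1, val_mem_weightSupport.2 h.2⟩
    rcases hi with rfl | rfl
    · rw [crossWeight_apply_left he, posPart_sub_of_eq_zero_or (hf₀ _) (hf₀ _) hpq]
    · rw [crossWeight_apply_right he, negPart_sub_of_eq_zero_or (hf₀ _) (hf₀ _) hpq]
  · push Not at hv
    rw [crossWeight_apply_of_forall_ne _ hv, eq_comm, ← not_ne_iff, ← val_mem_weightSupport]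
    intro h
    obtain ⟨i, hi | hi⟩ := hf.1 _ h
    exacts [(hv i).1 (Fin.ext hi.symm), (hv i).2 (Fin.ext hi.symm)]

lemma sum_abs_sub_eq_one (f : GeomReal m (IsCrossFace p q)) :
    ∑ i, |f.1 (p i) - f.1 (q i)| = 1 := by
  obtain ⟨f, hf₀, hf₁, hf⟩ := f
  rw [← sum_crossWeight, crossWeight_sub he hf₀ hf, hf₁]

noncomputable def GeomReal.crossPolytopeHomeomorph :
    GeomReal m (IsCrossFace p q) ≃ₜ Metric.sphere (0 : PiLp 1 (fun _ : ι => ℝ)) 1 where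
  toFun f := ⟨WithLp.toLp 1 fun i => f.1 (p i) - f.1 (q i), by
    simpa [PiLp.norm_eq_of_L1] using sum_abs_sub_eq_one he f⟩
  invFun z := ⟨crossWeight p q z.1, crossWeight_nonneg _, by
    rw [sum_crossWeight]
    simpa only [PiLp.norm_eq_of_L1, Real.norm_eq_abs] using mem_sphere_zero_iff_norm.1 z.2,
    isCrossFace_weightSupport_crossWeight he _⟩
  left_inv f := Subtype.ext (crossWeight_sub he f.2.1 f.2.2.2)
  right_inv z := Subtype.ext (PiLp.ext fun i => by
    simp [crossWeight_apply_left he, crossWeight_apply_right he])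
  continuous_toFun := by
    refine Continuous.subtype_mk ?_ _
    have : Continuous fun f : Fin m → ℝ => WithLp.toLp 1 fun i => f (p i) - f (q i) := by
      fun_prop
    exact this.comp continuous_subtype_val
  continuous_invFun := (continuous_crossWeight.comp (by fun_prop)).subtype_mk _

end CrossPolytope

section UnitSphere

variable {E F : Type*} [NormedAddCommGroup E] [NormedSpace ℝ E] [NormedAddCommGroup F]
  [NormedSpace ℝ F] (L : E ≃L[ℝ] F)

lemma ContinuousLinearEquiv.apply_ne_zero_of_mem_unit_sphere (x : Metric.sphere (0 : E) 1) :
    L x ≠ 0 :=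
  (map_ne_zero_iff L L.injective).2 (ne_zero_of_mem_unit_sphere x)

lemma ContinuousLinearEquiv.continuous_inv_norm_smul_apply :
    Continuous fun x : Metric.sphere (0 : E) 1 => ‖L x‖⁻¹ • L x := by
  have hL : Continuous fun x : Metric.sphere (0 : E) 1 => L x :=
    L.continuous.comp continuous_subtype_val
  exact (hL.norm.inv₀ fun x => norm_ne_zero_iff.2 (L.apply_ne_zero_of_mem_unit_sphere x)).smul hL

lemma ContinuousLinearEquiv.inv_norm_smul_symm_inv_norm_smul {x : E} (hx : ‖x‖ = 1) :
    ‖L.symm (‖L x‖⁻¹ • L x)‖⁻¹ • L.symm (‖L x‖⁻¹ • L x) = x := by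
  have hLx : ‖L x‖ ≠ 0 := by
    rw [norm_ne_zero_iff, map_ne_zero_iff L L.injective, ← norm_ne_zero_iff, hx]
    exact one_ne_zero
  rw [map_smul, L.symm_apply_apply, norm_smul, hx, mul_one, norm_inv, norm_norm, inv_inv,
    smul_smul, mul_inv_cancel₀ hLx, one_smul]

noncomputable def ContinuousLinearEquiv.unitSphereHomeomorph :
    Metric.sphere (0 : E) 1 ≃ₜ Metric.sphere (0 : F) 1 where
  toFun x := ⟨‖L x‖⁻¹ • L x, mem_sphere_zero_iff_norm.2
    (norm_smul_inv_norm (L.apply_ne_zero_of_mem_unit_sphere x))⟩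
  invFun y := ⟨‖L.symm y‖⁻¹ • L.symm y, mem_sphere_zero_iff_norm.2
    (norm_smul_inv_norm (L.symm.apply_ne_zero_of_mem_unit_sphere y))⟩
  left_inv x := Subtype.ext (L.inv_norm_smul_symm_inv_norm_smul (norm_eq_of_mem_sphere x))
  right_inv y := Subtype.ext (L.symm.inv_norm_smul_symm_inv_norm_smul (norm_eq_of_mem_sphere y))
  continuous_toFun := L.continuous_inv_norm_smul_apply.subtype_mk _
  continuous_invFun := L.symm.continuous_inv_norm_smul_apply.subtype_mk _

end UnitSphere

lemma Finset.subset_pair_iff_eq {α : Type*} [DecidableEq α] {s : Finset α} {a b : α} :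
    s ⊆ {a, b} ↔ s = ∅ ∨ s = {a} ∨ s = {b} ∨ s = {a, b} := by
  rw [← coe_subset, coe_pair, Set.subset_pair_iff_eq]
  simp only [← coe_singleton, ← coe_insert, coe_eq_empty, coe_inj]

lemma graph_face_iff_subset_edge {α : Type*} [DecidableEq α] {C : Finset α}
    {E : Finset (Finset α)} (hE : ∀ e ∈ E, ∃ a ∈ C, ∃ b ∈ C, e = {a, b})
    (hC : ∀ a ∈ C, ∃ e ∈ E, a ∈ e) (hne : E.Nonempty) {s : Finset α} :
    (s = ∅ ∨ (∃ a ∈ C, s = {a}) ∨ s ∈ E) ↔ ∃ e ∈ E, s ⊆ e := by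
  constructor
  · rintro (rfl | ⟨a, ha, rfl⟩ | hs)
    · exact hne.imp fun e he => ⟨he, empty_subset e⟩
    · simpa using hC a ha
    · exact ⟨s, hs, subset_rfl⟩
  · rintro ⟨e, he, hs⟩
    obtain ⟨a, ha, b, hb, rfl⟩ := hE e he
    rcases subset_pair_iff_eq.1 hs with rfl | rfl | rfl | rfl
    exacts [.inl rfl, .inr (.inl ⟨a, ha, rfl⟩), .inr (.inl ⟨b, hb, rfl⟩), .inr (.inr he)]

section Pentagon

variable {n : ℕ} {T s t : Finset ℕ}

lemma pentFace_iff : pentFace n t ↔ t ⊆ Icc 1 (2 * n + 1) ∧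
    (∀ i ∈ Icc 1 (n - 2), ¬(i ∈ t ∧ n + i ∈ t)) ∧ ∃ e ∈ pentEdges n, t ∩ pentCyc n ⊆ e := by
  refine and_congr_right fun _ => and_congr_right fun _ => graph_face_iff_subset_edge ?_ ?_ ?_
  · simp [pentEdges, pentCyc]
  · simp [pentEdges, pentCyc]
  · simp [pentEdges]

lemma pentFace.mono (ht : pentFace n t) (hst : s ⊆ t) : pentFace n s := by
  obtain ⟨ht₁, ht₂, e, he, hte⟩ := pentFace_iff.1 ht
  exact pentFace_iff.2 ⟨hst.trans ht₁, fun i hi h => ht₂ i hi ⟨hst h.1, hst h.2⟩, e, he,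
    (inter_subset_inter_right hst).trans hte⟩

lemma chi'Supp_subset (n : ℕ) (T : Finset ℕ) :
    chi'Supp n T ⊆ insert (2 * n + 1) (T ∪ T.image (n + ·)) := by
  intro j hj
  obtain ⟨i, hi, hne⟩ := exists_ne_zero_of_sum_ne_zero (mem_filter.1 hj).2
  unfold chi'Entry at hne
  split_ifs at hne with h
  · rcases h with rfl | rfl | rfl <;> simp [hi]
  · exact absurd rfl hne

lemma subset_chi'Supp (hT : T ⊆ Icc 1 n) : T ∪ T.image (n + ·) ⊆ chi'Supp n T := by
  intro j hj
  obtain ⟨i, hi, hji⟩ : ∃ i ∈ T, j = i ∨ j = n + i := by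
    simp only [mem_union, mem_image] at hj
    rcases hj with hj | ⟨i, hi, rfl⟩
    exacts [⟨j, hj, .inl rfl⟩, ⟨i, hi, .inr rfl⟩]
  have hi' := mem_Icc.1 (hT hi)
  refine mem_filter.2 ⟨mem_Icc.2 (by omega), ?_⟩
  rw [sum_eq_single i]
  · rw [chi'Entry, if_pos (by omega)]
    exact one_ne_zero
  · intro i' hi'T hne
    have := mem_Icc.1 (hT hi'T)
    rw [chi'Entry, if_neg (by omega)]
  · exact fun h => absurd hi h

lemma pentFace_insert_of_mem (hT : T ⊆ Icc 1 n) {i₀ v₀ : ℕ} (hi₀ : i₀ ∈ T)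
    (hT₀ : ∀ i ∈ T, i = i₀ ∨ i + 2 ≤ n) (hv₀ : (i₀ + 1 = n ∧ v₀ = i₀) ∨ (i₀ = n ∧ v₀ = n + i₀))
    (ht : pentFace n t) (htS : t ⊆ chi'Supp n T) (hc : 2 * n + 1 ∈ t) :
    pentFace n (insert v₀ t) := by
  obtain ⟨ht₁, ht₂, e, he, hte⟩ := pentFace_iff.1 ht
  have hi₀' := mem_Icc.1 (hT hi₀)
  have hcyc : ∀ x ∈ t ∩ pentCyc n, x = v₀ ∨ x = 2 * n + 1 := by
    intro x hx
    have hxe : x = 2 * n ∨ x = 2 * n + 1 ∨ x = n - 1 := by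
      have hce := hte (mem_inter.2 ⟨hc, by simp [pentCyc]⟩)
      have hxe := hte hx
      simp only [pentEdges, mem_insert, mem_singleton] at he
      rcases he with rfl | rfl | rfl | rfl | rfl <;> simp at hce hxe <;> omega
    have hxS := chi'Supp_subset n T (htS (mem_inter.1 hx).1)
    simp only [mem_insert, mem_union, mem_image] at hxS
    rcases hxS with h | h | ⟨a, ha, rfl⟩
    · exact .inr h
    · have := mem_Icc.1 (hT h); have := hT₀ x h; omega
    · have := mem_Icc.1 (hT ha); have := hT₀ a ha; omega
  refine pentFace_iff.2 ⟨insert_subset (mem_Icc.2 (by omega)) ht₁, fun i hi h => ht₂ i hi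
    ⟨(mem_insert.1 h.1).resolve_left ?_, (mem_insert.1 h.2).resolve_left ?_⟩, ?_⟩
  · have := mem_Icc.1 hi; omega
  · have := mem_Icc.1 hi; omega
  · have hsub : insert v₀ t ∩ pentCyc n ⊆ {v₀, 2 * n + 1} := by
      intro x hx
      rw [mem_inter, mem_insert] at hx
      rcases hx with ⟨rfl | hxt, hxC⟩
      · simp
      · simpa using hcyc x (mem_inter.2 ⟨hxt, hxC⟩)
    rcases hv₀ with ⟨h, hv⟩ | ⟨h, hv⟩
    · refine ⟨{2 * n + 1, n - 1}, by simp [pentEdges], ?_⟩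
      rwa [show n - 1 = v₀ by omega, pair_comm]
    · refine ⟨{2 * n, 2 * n + 1}, by simp [pentEdges], ?_⟩
      rwa [show 2 * n = v₀ by omega] at hsub ⊢

lemma pentFace.not_mem_and_add_mem (hn : 2 ≤ n) (ht : pentFace n t) {i : ℕ}
    (hi : i ∈ Icc 1 n) : ¬(i ∈ t ∧ n + i ∈ t) := by
  obtain ⟨-, ht₂, e, he, hte⟩ := pentFace_iff.1 ht
  have hi' := mem_Icc.1 hi
  by_cases hin : i + 2 ≤ n
  · exact ht₂ i (mem_Icc.2 ⟨hi'.1, by omega⟩)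
  · intro h
    have h₁ := hte (mem_inter.2 ⟨h.1, by simp [pentCyc]; omega⟩)
    have h₂ := hte (mem_inter.2 ⟨h.2, by simp [pentCyc]; omega⟩)
    simp only [pentEdges, mem_insert, mem_singleton] at he
    rcases he with rfl | rfl | rfl | rfl | rfl <;> simp at h₁ h₂ <;> omega

lemma pentFace_of_forall_mem (hT : T ⊆ Icc 1 n) {i₀ : ℕ} (hT₀ : ∀ i ∈ T, i = i₀ ∨ i + 2 ≤ n)
    (hsupp : ∀ j ∈ t, ∃ i ∈ T, j = i ∨ j = n + i) (hanti : ∀ i ∈ T, ¬(i ∈ t ∧ n + i ∈ t)) :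
    pentFace n t := by
  have hcyc (x : ℕ) (hx : x ∈ t ∩ pentCyc n) :
      ∃ i ∈ T, i = i₀ ∧ n ≤ i + 1 ∧ (x = i ∨ x = n + i) := by
    rw [mem_inter] at hx
    obtain ⟨i, hi, hix⟩ := hsupp x hx.1
    have := mem_Icc.1 (hT hi)
    have := hT₀ i hi
    have := hx.2
    simp only [pentCyc, mem_insert, mem_singleton] at this
    exact ⟨i, hi, by omega, by omega, by omega⟩
  refine pentFace_iff.2 ⟨fun j hj => ?_, fun i hi h => ?_, ?_⟩
  · obtain ⟨i, hi, hij⟩ := hsupp j hj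
    have := mem_Icc.1 (hT hi)
    exact mem_Icc.2 (by omega)
  · obtain ⟨a, ha, hai⟩ := hsupp i h.1
    have := mem_Icc.1 (hT ha)
    have := mem_Icc.1 hi
    obtain rfl : a = i := by omega
    exact hanti a ha h
  · by_cases hhigh : n + i₀ ∈ t
    · refine ⟨{2 * n - 1, 2 * n}, by simp [pentEdges], fun x hx => ?_⟩
      obtain ⟨i, hi, rfl, hin, rfl | rfl⟩ := hcyc x hx
      · exact absurd ⟨(mem_inter.1 hx).1, hhigh⟩ (hanti _ hi)
      · have := mem_Icc.1 (hT hi)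
        simp only [mem_insert, mem_singleton]
        omega
    · refine ⟨{n - 1, n}, by simp [pentEdges], fun x hx => ?_⟩
      obtain ⟨i, hi, rfl, hin, rfl | rfl⟩ := hcyc x hx
      · have := mem_Icc.1 (hT hi)
        simp only [mem_insert, mem_singleton]
        omega
      · exact absurd (mem_inter.1 hx).1 hhigh

def lowVertex (hT : T ⊆ Icc 1 n) (i : T) : Fin (2 * n + 2) :=
  ⟨i, by have := mem_Icc.1 (hT i.2); omega⟩

def highVertex (hT : T ⊆ Icc 1 n) (i : T) : Fin (2 * n + 2) :=
  ⟨n + i, by have := mem_Icc.1 (hT i.2); omega⟩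

lemma injective_sumElim_lowVertex_highVertex (hT : T ⊆ Icc 1 n) :
    Function.Injective (Sum.elim (lowVertex hT) (highVertex hT)) := by
  rintro (⟨i, hi⟩ | ⟨i, hi⟩) (⟨j, hj⟩ | ⟨j, hj⟩) h <;>
    have := mem_Icc.1 (hT hi) <;> have := mem_Icc.1 (hT hj) <;>
    simp [lowVertex, highVertex, Fin.ext_iff] at h <;> first | omega | simp [h]

lemma isCrossFace_lowVertex_highVertex_iff (hT : T ⊆ Icc 1 n) :
    IsCrossFace (lowVertex hT) (highVertex hT) t ↔
      (∀ j ∈ t, ∃ i ∈ T, j = i ∨ j = n + i) ∧ ∀ i ∈ T, ¬(i ∈ t ∧ n + i ∈ t) := by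
  simp only [IsCrossFace, lowVertex, highVertex, Subtype.exists, Subtype.forall, exists_prop,
    eq_comm]

lemma pentFace_subset_chi'Supp_iff_isCrossFace (hn : 2 ≤ n) (hT : T ⊆ Icc 1 n) {i₀ : ℕ}
    (hT₀ : ∀ i ∈ T, i = i₀ ∨ i + 2 ≤ n) :
    (pentFace n t ∧ t ⊆ chi'Supp n T) ∧ 2 * n + 1 ∉ t ↔
      IsCrossFace (lowVertex hT) (highVertex hT) t := by
  rw [isCrossFace_lowVertex_highVertex_iff]
  constructor
  · rintro ⟨⟨ht, htS⟩, hc⟩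
    refine ⟨fun j hj => ?_, fun i hi => ht.not_mem_and_add_mem hn (hT hi)⟩
    have := chi'Supp_subset n T (htS hj)
    simp only [mem_insert, mem_union, mem_image] at this
    rcases this with rfl | h | ⟨i, hi, rfl⟩
    exacts [absurd hj hc, ⟨j, h, .inl rfl⟩, ⟨i, hi, .inr rfl⟩]
  · rintro ⟨hsupp, hanti⟩
    refine ⟨⟨pentFace_of_forall_mem hT hT₀ hsupp hanti, fun j hj => subset_chi'Supp hT ?_⟩,
      fun hc => ?_⟩
    · obtain ⟨i, hi, rfl | rfl⟩ := hsupp j hj <;> simp [hi]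
    · obtain ⟨i, hi, hij⟩ := hsupp _ hc
      have := mem_Icc.1 (hT hi)
      omega

/-- `i₀` is the element of `T` among `n - 1` and `n`; `v₀` is whichever of `i₀` and `n + i₀` is
adjacent to `2n+1` on the pentagon. -/
lemma exists_pentagon_apex (hT : T ⊆ Icc 1 n) (hone : (n - 1 ∈ T ∧ n ∉ T) ∨ (n - 1 ∉ T ∧ n ∈ T)) :
    ∃ i₀ ∈ T, (∀ i ∈ T, i = i₀ ∨ i + 2 ≤ n) ∧
      ∃ v₀, (i₀ + 1 = n ∧ v₀ = i₀) ∨ (i₀ = n ∧ v₀ = n + i₀) := by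
  rcases hone with ⟨h₁, h₂⟩ | ⟨h₁, h₂⟩
  · refine ⟨n - 1, h₁, fun i hi => ?_, n - 1, .inl ⟨?_, rfl⟩⟩
    · have := mem_Icc.1 (hT hi)
      have : i ≠ n := fun h => h₂ (h ▸ hi)
      omega
    · have := mem_Icc.1 (hT h₁)
      omega
  · refine ⟨n, h₂, fun i hi => ?_, n + n, .inr ⟨rfl, rfl⟩⟩
    have := mem_Icc.1 (hT hi)
    have : i ≠ n - 1 := fun h => h₁ (h ▸ hi)
    omega

end Pentagon

/-- Let `n ≥ 3` and let `T ⊆ {1,…,n}` contain exactly one of the two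
elements `n−1` and `n`. Then the realization of the induced subcomplex `K'_{χ',T}` is
homotopy equivalent to the sphere `S^{|T|−1}`. -/
theorem geomReal_pent_subcomplex_one (n : ℕ) (hn : 3 ≤ n) (T : Finset ℕ)
    (hT : T ⊆ Finset.Icc 1 n)
    (hone : (n - 1 ∈ T ∧ n ∉ T) ∨ (n - 1 ∉ T ∧ n ∈ T)) :
    Nonempty (ContinuousMap.HomotopyEquiv
      (GeomReal (2 * n + 2) (fun t => pentFace n t ∧ t ⊆ chi'Supp n T))
      (Metric.sphere (0 : EuclideanSpace ℝ (Fin T.card)) 1)) := by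
  obtain ⟨i₀, hi₀, hT₀, v₀, hv₀⟩ := exists_pentagon_apex hT hone
  have hi₀n := mem_Icc.1 (hT hi₀)
  have hv₀T : v₀ ∈ T ∪ T.image (n + ·) := by
    rcases hv₀ with ⟨-, rfl⟩ | ⟨-, rfl⟩ <;> simp [hi₀]
  have hdom (t : Finset ℕ) (ht : pentFace n t ∧ t ⊆ chi'Supp n T) (hc : 2 * n + 1 ∈ t) :
      pentFace n (insert v₀ t) ∧ insert v₀ t ⊆ chi'Supp n T :=
    ⟨pentFace_insert_of_mem hT hi₀ hT₀ hv₀ ht.1 ht.2 hc,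
      insert_subset (subset_chi'Supp hT hv₀T) ht.2⟩
  let L : PiLp 1 (fun _ : T => ℝ) ≃L[ℝ] EuclideanSpace ℝ (Fin T.card) :=
    (PiLp.continuousLinearEquiv 1 ℝ _).trans ((PiLp.continuousLinearEquiv 2 ℝ _).symm.trans
      (LinearIsometryEquiv.piLpCongrLeft 2 ℝ ℝ T.equivFin).toContinuousLinearEquiv)
  exact ⟨(GeomReal.homotopyEquivDeleteDominated (c := ⟨2 * n + 1, by omega⟩)
      (v := ⟨v₀, by omega⟩) (Fin.ne_of_val_ne (show 2 * n + 1 ≠ v₀ by omega))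
      (fun s t hst ht => ⟨ht.1.mono hst, hst.trans ht.2⟩) hdom).trans
    ((GeomReal.homeomorphOfIff fun _ =>
      pentFace_subset_chi'Supp_iff_isCrossFace (by omega) hT hT₀).trans
      ((GeomReal.crossPolytopeHomeomorph (injective_sumElim_lowVertex_highVertex hT)).trans
        L.unitSphereHomeomorph)).toHomotopyEquiv⟩
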